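/- Let x be a complex number and α a complex number such that neither 2α nor α+1/2 is a nonpositive integer. Then ₁F₁(α; 2α; x) · ₁F₁(α; 2α; −x) = ₁F₂(α; α+1/2, 2α; x²/4). -/

import Mathlib

/-- Pochhammer symbol (rising factorial) `(c)_k = c (c+1) ⋯ (c+k-1)` for complex `c`. -/
noncomputable def poch (c : ℂ) (k : ℕ) : ℂ := ∏ l ∈ Finset.range k, (c + l)

/-- Generalized hypergeometric series `ₚF_q(a; b; x) = Σ_k (a₁)_k⋯(a_p)_k / ((b₁)_k⋯(b_q)_k) · x^k/k!`. -/
noncomputable def pFq (a b : List ℂ) (x : ℂ) : ℂ :=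
  ∑' k : ℕ, ((a.map (fun c => poch c k)).prod / (b.map (fun c => poch c k)).prod)
    * x ^ k / (Nat.factorial k)

/-- `c` is not a nonpositive integer, i.e. `c ≠ 0, -1, -2, …`. -/
def NotNonposInt (c : ℂ) : Prop := ∀ n : ℕ, c ≠ -(n : ℂ)

/-!
Kummer's second theorem `₁F₁(α; 2α; x) = e^{x/2} ₀F₁(; α + 1/2; x²/16)` turns the left-hand
side into `e^{x/2} e^{-x/2} ₀F₁(; α + 1/2; x²/16)² = ₀F₁(; α + 1/2; x²/16)²`, and the Cauchy
square of the Bessel-type series is `₀F₁(; b; z)² = ₁F₂(b - 1/2; b, 2b - 1; 4z)`. On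
coefficients, both identities are terminating Chu–Vandermonde sums
`₂F₁(-m, a; c; 1) = (c - a)_m / (c)_m`, combined with the duplication formula
`(2a)_{2m} = 4^m (a)_m (a + 1/2)_m`.
-/

open Finset Polynomial Nat

lemma poch_eq_eval (c : ℂ) (k : ℕ) : poch c k = (ascPochhammer ℂ k).eval c := by
  induction k with
  | zero => simp [poch]
  | succ k ih => rw [poch, prod_range_succ, ← poch, ih, ascPochhammer_succ_eval]

lemma poch_succ (c : ℂ) (k : ℕ) : poch c (k + 1) = poch c k * (c + k) :=
  prod_range_succ _ k

lemma poch_add (c : ℂ) (m n : ℕ) : poch c (m + n) = poch c m * poch (c + m) n := by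
  simp only [poch, prod_range_add, Nat.cast_add, add_assoc]

lemma poch_ne_zero {c : ℂ} (hc : NotNonposInt c) (k : ℕ) : poch c k ≠ 0 :=
  prod_ne_zero_iff.2 fun l _ hl => hc l (eq_neg_of_add_eq_zero_left hl)

lemma NotNonposInt.of_two_mul_sub_one {b : ℂ} (h : NotNonposInt (2 * b - 1)) : NotNonposInt b :=
  fun n hn => h (2 * n + 1) (by rw [hn]; push_cast; ring)

lemma poch_neg_natCast (m k : ℕ) : poch (-m) k = (-1) ^ k * m.descFactorial k := by
  rw [poch_eq_eval, ascPochhammer_eval_neg_eq_descPochhammer, descPochhammer_eval_eq_descFactorial]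

lemma poch_one_sub_sub (c : ℂ) (k : ℕ) : poch (1 - c - k) k = (-1) ^ k * poch c k := by
  rw [poch_eq_eval, poch_eq_eval, show 1 - c - k = -(c + k - 1) by ring,
    ascPochhammer_eval_neg_eq_descPochhammer, descPochhammer_eval_eq_ascPochhammer,
    show c + k - 1 - k + 1 = c by ring]

lemma descPochhammer_smeval_eq_poch (t : ℂ) (k : ℕ) :
    (descPochhammer ℤ k).smeval t = poch (t - k + 1) k := by
  rw [descPochhammer_smeval_eq_ascPochhammer, ascPochhammer_smeval_eq_eval, poch_eq_eval]

lemma poch_two_mul_two_mul (a : ℂ) (m : ℕ) :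
    poch (2 * a) (2 * m) = 4 ^ m * poch a m * poch (a + 1 / 2) m := by
  induction m with
  | zero => simp [poch]
  | succ m ih =>
    rw [show 2 * (m + 1) = 2 * m + 1 + 1 by ring, poch_succ, poch_succ, ih, poch_succ, poch_succ]
    push_cast
    ring

lemma poch_two_mul (a : ℂ) (n : ℕ) :
    poch (2 * a) n = 2 ^ n * poch a (n - n / 2) * poch (a + 1 / 2) (n / 2) := by
  obtain ⟨m, rfl | rfl⟩ := Nat.even_or_odd' n
  · rw [show 2 * m - 2 * m / 2 = m by omega, show 2 * m / 2 = m by omega, poch_two_mul_two_mul,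
      pow_mul]
    norm_num
  · rw [show 2 * m + 1 - (2 * m + 1) / 2 = m + 1 by omega, show (2 * m + 1) / 2 = m by omega,
      poch_succ, poch_two_mul_two_mul, poch_succ, pow_succ, pow_mul]
    push_cast
    ring

theorem chu_vandermonde (m : ℕ) (a c : ℂ) (hc : poch c m ≠ 0) :
    ∑ p ∈ range (m + 1), poch (-m) p * poch a p / (poch c p * p !) =
      poch (c - a) m / poch c m := by
  -- Chu–Vandermonde for falling factorials, at `r = -a` and `s = c + m - 1`
  have hvdm := Ring.descPochhammer_smeval_add m (Commute.all (-a) (c + m - 1))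
  simp only [descPochhammer_smeval_eq_poch] at hvdm
  rw [show -a + (c + m - 1) - m + 1 = c - a by ring, Nat.sum_antidiagonal_eq_sum_range_succ_mk]
    at hvdm
  rw [hvdm, sum_div]
  refine sum_congr rfl fun p hp => ?_
  have hpm : p ≤ m := Nat.lt_succ_iff.1 (mem_range.1 hp)
  have hsplit : poch c m = poch c p * poch (c + p) (m - p) := by
    rw [← poch_add, Nat.add_sub_cancel' hpm]
  rw [hsplit] at hc ⊢
  obtain ⟨hcp, hcmp⟩ := mul_ne_zero_iff.1 hc
  rw [show c + m - 1 - ↑(m - p) + 1 = c + p by push_cast [Nat.cast_sub hpm]; ring,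
    show -a - p + 1 = 1 - a - p by ring, poch_one_sub_sub, poch_neg_natCast,
    Nat.descFactorial_eq_factorial_mul_choose]
  have hfact : (p ! : ℂ) ≠ 0 := by exact_mod_cast p.factorial_ne_zero
  push_cast
  field_simp

noncomputable def pFqCoeff (a b : List ℂ) (n : ℕ) : ℂ :=
  (a.map (fun c => poch c n)).prod / (b.map (fun c => poch c n)).prod / n !

lemma pFq_eq_tsum (a b : List ℂ) (z : ℂ) : pFq a b z = ∑' n, pFqCoeff a b n * z ^ n :=
  tsum_congr fun n => by rw [pFqCoeff]; ring

lemma summable_norm_pFqCoeff_nil_mul_pow (b z : ℂ) :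
    Summable fun n => ‖pFqCoeff [] [b] n * z ^ n‖ := by
  refine summable_of_ratio_norm_eventually_le (r := 1 / 2) (by norm_num) ?_
  filter_upwards [tendsto_natCast_atTop_atTop.eventually_ge_atTop (‖b‖ + 2 * ‖z‖ + 1)]
    with n hn
  have hstep : pFqCoeff [] [b] (n + 1) * z ^ (n + 1) =
      pFqCoeff [] [b] n * z ^ n * (z / ((b + n) * (n + 1))) := by
    simp only [pFqCoeff, List.map_cons, List.map_nil, List.prod_cons, List.prod_nil, mul_one,
      poch_succ, factorial_succ, pow_succ]
    push_cast
    field_simp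
  have hden : 2 * ‖z‖ + 1 ≤ ‖(b + n) * (n + 1)‖ := by
    have hbn : (n : ℝ) - ‖b‖ ≤ ‖b + n‖ := by
      simpa [sub_eq_neg_add, add_comm] using norm_sub_norm_le (n : ℂ) (-b)
    rw [norm_mul, show ((n : ℂ) + 1) = ((n + 1 : ℕ) : ℂ) by push_cast; rfl,
      Complex.norm_natCast]
    push_cast
    nlinarith [norm_nonneg (b + n)]
  rw [norm_norm, norm_norm, hstep, norm_mul, norm_div, mul_comm (1 / 2 : ℝ)]
  refine mul_le_mul_of_nonneg_left ?_ (norm_nonneg _)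
  rw [div_le_iff₀ (by linarith [norm_nonneg z])]
  linarith

lemma tsum_mul_tsum_pow_eq {a b : ℕ → ℂ} {z : ℂ} (ha : Summable fun n => ‖a n * z ^ n‖)
    (hb : Summable fun n => ‖b n * z ^ n‖) :
    (∑' n, a n * z ^ n) * ∑' n, b n * z ^ n =
      ∑' n, (∑ kl ∈ antidiagonal n, a kl.1 * b kl.2) * z ^ n := by
  rw [tsum_mul_tsum_eq_tsum_sum_antidiagonal_of_summable_norm ha hb]
  refine tsum_congr fun n => ?_
  rw [sum_mul]
  refine sum_congr rfl fun kl hkl => ?_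
  rw [← mem_antidiagonal.1 hkl, pow_add]
  ring

lemma sum_range_succ_of_odd_eq_zero {f : ℕ → ℂ} (hf : ∀ p, f (2 * p + 1) = 0) (n : ℕ) :
    ∑ j ∈ range (n + 1), f j = ∑ p ∈ range (n / 2 + 1), f (2 * p) := by
  rw [← sum_image (g := (2 * ·)) fun _ _ _ _ h => by simpa using h]
  refine (sum_subset (fun j hj => ?_) fun j hj hj' => ?_).symm
  · obtain ⟨p, hp, rfl⟩ := mem_image.1 hj
    simp only [mem_range] at hp ⊢
    omega
  · obtain ⟨p, rfl | rfl⟩ := Nat.even_or_odd' j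
    · exact absurd (mem_image.2 ⟨p, by simp only [mem_range] at hj ⊢; omega, rfl⟩) hj'
    · exact hf p

lemma tsum_mul_tsum_sq_pow_eq {a b : ℕ → ℂ} {z : ℂ}
    (ha : Summable fun n => ‖a n * z ^ n‖)
    (hb : Summable fun p => ‖b p * (z ^ 2) ^ p‖) :
    (∑' n, a n * z ^ n) * ∑' p, b p * (z ^ 2) ^ p =
      ∑' n, (∑ p ∈ range (n / 2 + 1), a (n - 2 * p) * b p) * z ^ n := by
  set s : ℕ → ℂ := fun n => if Even n then b (n / 2) else 0
  have hs_even : ∀ p, s (2 * p) * z ^ (2 * p) = b p * (z ^ 2) ^ p := fun p => by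
    simp [s, pow_mul]
  have hs_odd : ∀ p, s (2 * p + 1) = 0 := fun p => by simp [s]
  have hs : Summable fun n => ‖s n * z ^ n‖ :=
    Summable.even_add_odd (by simpa only [hs_even] using hb) (by simp [hs_odd])
  have hs_tsum : ∑' p, b p * (z ^ 2) ^ p = ∑' n, s n * z ^ n := by
    rw [← tsum_even_add_odd (f := fun n => s n * z ^ n) (by simpa only [hs_even] using hb.of_norm)
      (by simp [hs_odd])]
    simp [hs_even, hs_odd]
  rw [hs_tsum, tsum_mul_tsum_pow_eq ha hs]
  refine tsum_congr fun n => ?_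
  rw [← Nat.sum_antidiagonal_swap, Nat.sum_antidiagonal_eq_sum_range_succ_mk]
  simp only [Prod.swap]
  rw [sum_range_succ_of_odd_eq_zero (by simp [hs_odd])]
  congr 1
  refine sum_congr rfl fun p _ => ?_
  simp [s]

lemma chu_vandermonde_half (n : ℕ) (c : ℂ) (hc : poch c (n / 2) ≠ 0) :
    ∑ p ∈ range (n / 2 + 1), poch (-n / 2) p * poch ((1 - n) / 2) p / (poch c p * p !) =
      poch (c - 1 / 2 + ↑(n - n / 2)) (n / 2) / poch c (n / 2) := by
  -- one of `-n/2` and `(1 - n)/2` is the negative integer `-(n/2)`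
  obtain ⟨m, rfl | rfl⟩ := Nat.even_or_odd' n
  · rw [show 2 * m / 2 = m by omega, show 2 * m - m = m by omega] at *
    rw [show c - 1 / 2 + m = c - (1 / 2 - m) by ring, ← chu_vandermonde m _ c hc]
    refine sum_congr rfl fun p _ => ?_
    push_cast
    ring_nf
  · rw [show (2 * m + 1) / 2 = m by omega, show 2 * m + 1 - m = m + 1 by omega] at *
    rw [show c - 1 / 2 + ↑(m + 1) = c - (-1 / 2 - m) by push_cast; ring,
      ← chu_vandermonde m _ c hc]
    refine sum_congr rfl fun p _ => ?_
    push_cast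
    ring_nf

lemma pFqCoeff_kummer_second (α : ℂ) (n : ℕ) (h2α : poch (2 * α) n ≠ 0) :
    pFqCoeff [α] [2 * α] n = ∑ p ∈ range (n / 2 + 1),
      (1 / 2) ^ (n - 2 * p) / (n - 2 * p) ! * (pFqCoeff [] [α + 1 / 2] p / 16 ^ p) := by
  have hterm : ∀ p ∈ range (n / 2 + 1),
      (1 / 2 : ℂ) ^ (n - 2 * p) / (n - 2 * p) ! * (pFqCoeff [] [α + 1 / 2] p / 16 ^ p) =
        ((2 : ℂ) ^ n * n !)⁻¹ *
          (poch (-n / 2) p * poch ((1 - n) / 2) p / (poch (α + 1 / 2) p * p !)) := by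
    intro p hp
    have hpn : 2 * p ≤ n := by simp only [mem_range] at hp; omega
    have hdup := poch_two_mul_two_mul (-n / 2) p
    rw [show 2 * (-(n : ℂ) / 2) = -n by ring, show -(n : ℂ) / 2 + 1 / 2 = (1 - n) / 2 by ring,
      poch_neg_natCast, pow_mul, neg_one_sq, one_pow, one_mul] at hdup
    have hdesc : (n.descFactorial (2 * p) : ℂ) ≠ 0 := by
      exact_mod_cast (Nat.descFactorial_pos.2 hpn).ne'
    have hfact : ((n - 2 * p) ! : ℂ) = n ! / n.descFactorial (2 * p) := by
      rw [eq_div_iff hdesc]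
      exact_mod_cast Nat.factorial_mul_descFactorial hpn
    rw [hdup] at hdesc hfact
    have h2pow : (2 : ℂ) ^ n = 2 ^ (n - 2 * p) * 4 ^ p := by
      rw [show (4 : ℂ) = 2 ^ 2 by norm_num, ← pow_mul, ← pow_add, Nat.sub_add_cancel hpn]
    simp only [pFqCoeff, List.map_cons, List.map_nil, List.prod_cons, List.prod_nil, mul_one]
    rw [hfact, h2pow, one_div_pow,
      show (16 : ℂ) ^ p = 4 ^ p * 4 ^ p by rw [← mul_pow]; norm_num]
    field_simp
  have hsplit : poch α n = poch α (n - n / 2) * poch (α + ↑(n - n / 2)) (n / 2) := by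
    rw [← poch_add, Nat.sub_add_cancel (Nat.div_le_self n 2)]
  rw [poch_two_mul] at h2α
  obtain ⟨⟨-, hα⟩, hc⟩ := mul_ne_zero_iff.1 h2α |>.imp_left mul_ne_zero_iff.1
  rw [sum_congr rfl hterm, ← mul_sum, chu_vandermonde_half n _ hc, add_sub_cancel_right]
  simp only [pFqCoeff, List.map_cons, List.map_nil, List.prod_cons, List.prod_nil, mul_one]
  rw [hsplit, poch_two_mul]
  field_simp

theorem pFq_kummer_second (α y : ℂ) (h1 : NotNonposInt (2 * α)) :
    pFq [α] [2 * α] y = Complex.exp (y / 2) * pFq [] [α + 1 / 2] (y ^ 2 / 16) := by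
  have hexp : Complex.exp (y / 2) = ∑' n, (1 / 2) ^ n / n ! * y ^ n := by
    rw [Complex.exp_eq_exp_ℂ, NormedSpace.exp_eq_tsum_div]
    exact tsum_congr fun n => by ring
  have hexp_summable : Summable fun n => ‖(1 / 2 : ℂ) ^ n / n ! * y ^ n‖ :=
    (Real.summable_pow_div_factorial (‖y‖ / 2)).congr fun n => by
      simp only [div_pow, one_div, inv_pow, Complex.norm_mul, Complex.norm_div, norm_inv,
        norm_pow, Complex.norm_ofNat, RCLike.norm_natCast]
      ring
  have hG : pFq [] [α + 1 / 2] (y ^ 2 / 16) =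
      ∑' p, pFqCoeff [] [α + 1 / 2] p / 16 ^ p * (y ^ 2) ^ p := by
    rw [pFq_eq_tsum]
    exact tsum_congr fun p => by rw [div_pow]; ring
  have hG_summable : Summable fun p => ‖pFqCoeff [] [α + 1 / 2] p / 16 ^ p * (y ^ 2) ^ p‖ :=
    (summable_norm_pFqCoeff_nil_mul_pow (α + 1 / 2) (y ^ 2 / 16)).congr fun p => by
      rw [div_pow]
      ring_nf
  rw [pFq_eq_tsum, hexp, hG, tsum_mul_tsum_sq_pow_eq hexp_summable hG_summable]
  exact tsum_congr fun n => by rw [pFqCoeff_kummer_second α n (poch_ne_zero h1 n)]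

lemma sum_antidiagonal_pFqCoeff_nil_singleton_mul (b : ℂ) (m : ℕ) (hb : poch b m ≠ 0)
    (h2b : poch (2 * b - 1) m ≠ 0) :
    ∑ kl ∈ antidiagonal m, pFqCoeff [] [b] kl.1 * pFqCoeff [] [b] kl.2 =
      pFqCoeff [b - 1 / 2] [b, 2 * b - 1] m * 4 ^ m := by
  have hterm : ∀ k ∈ range (m + 1), pFqCoeff [] [b] k * pFqCoeff [] [b] (m - k) =
      (m ! * poch b m)⁻¹ * (poch (-m) k * poch (1 - b - m) k / (poch b k * k !)) := by
    intro k hk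
    have hkm : k ≤ m := Nat.lt_succ_iff.1 (mem_range.1 hk)
    have hsplit : poch b m = poch b (m - k) * poch (b + ↑(m - k)) k := by
      rw [← poch_add, Nat.sub_add_cancel hkm]
    have hfact : (m ! : ℂ) = (m - k) ! * m.descFactorial k := by
      exact_mod_cast (Nat.factorial_mul_descFactorial hkm).symm
    have hdesc : (m.descFactorial k : ℂ) ≠ 0 := by
      exact_mod_cast (Nat.descFactorial_pos.2 hkm).ne'
    rw [hsplit] at hb
    obtain ⟨hb₁, hb₂⟩ := mul_ne_zero_iff.1 hb
    simp only [pFqCoeff, List.map_cons, List.map_nil, List.prod_cons, List.prod_nil, mul_one]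
    rw [show 1 - b - m = 1 - (b + ↑(m - k)) - k by push_cast [Nat.cast_sub hkm]; ring,
      poch_one_sub_sub, poch_neg_natCast, hsplit, hfact]
    have hsign : ((-1 : ℂ) ^ k) ^ 2 = 1 := by
      rw [← pow_mul, mul_comm, pow_mul, neg_one_sq, one_pow]
    field_simp
    rw [hsign]
  have hdup := poch_two_mul_two_mul (b - 1 / 2) m
  rw [show 2 * (b - 1 / 2) = 2 * b - 1 by ring, show b - 1 / 2 + 1 / 2 = b by ring, two_mul m,
    poch_add, show 2 * b - 1 + m = b - (1 - b - m) by ring] at hdup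
  rw [Nat.sum_antidiagonal_eq_sum_range_succ_mk, sum_congr rfl hterm, ← mul_sum,
    chu_vandermonde m _ b hb]
  simp only [pFqCoeff, List.map_cons, List.map_nil, List.prod_cons, List.prod_nil, mul_one]
  generalize poch (b - 1 / 2) m = A, poch (2 * b - 1) m = C, poch (b - (1 - b - m)) m = D at *
  have : (m ! : ℂ) ≠ 0 := by exact_mod_cast m.factorial_ne_zero
  field_simp
  linear_combination hdup

theorem pFq_nil_singleton_sq (b z : ℂ) (h2b : NotNonposInt (2 * b - 1)) :
    pFq [] [b] z ^ 2 = pFq [b - 1 / 2] [b, 2 * b - 1] (4 * z) := by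
  rw [sq, pFq_eq_tsum, pFq_eq_tsum, tsum_mul_tsum_pow_eq (summable_norm_pFqCoeff_nil_mul_pow b z)
    (summable_norm_pFqCoeff_nil_mul_pow b z)]
  refine tsum_congr fun m => ?_
  rw [sum_antidiagonal_pFqCoeff_nil_singleton_mul b m (poch_ne_zero h2b.of_two_mul_sub_one m)
    (poch_ne_zero h2b m), mul_pow]
  ring

theorem preece_identity_general (x α : ℂ)
    (h1 : NotNonposInt (2*α)) :
    pFq [α] [2*α] x * pFq [α] [2*α] (-x) =
      pFq [α] [α + 1/2, 2*α] (x^2/4) := by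
  have h1' : NotNonposInt (2 * (α + 1 / 2) - 1) := by
    rwa [show 2 * (α + 1 / 2) - 1 = 2 * α by ring]
  calc pFq [α] [2*α] x * pFq [α] [2*α] (-x)
      = Complex.exp (x / 2 + -x / 2) * pFq [] [α + 1 / 2] (x ^ 2 / 16) ^ 2 := by
        rw [pFq_kummer_second α x h1, pFq_kummer_second α (-x) h1, neg_sq, Complex.exp_add]
        ring
    _ = pFq [α] [α + 1/2, 2*α] (x^2/4) := by
        rw [pFq_nil_singleton_sq _ _ h1', neg_div, add_neg_cancel, Complex.exp_zero, one_mul,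
          add_sub_cancel_right, show 2 * (α + 1 / 2) - 1 = 2 * α by ring,
          show 4 * (x ^ 2 / 16) = x ^ 2 / 4 by ring]

theorem preece_identity (x α : ℂ)
    (h1 : NotNonposInt (2*α)) (h2 : NotNonposInt (α + 1/2)) :
    pFq [α] [2*α] x * pFq [α] [2*α] (-x) =
      pFq [α] [α + 1/2, 2*α] (x^2/4) :=
  preece_identity_general x α h1
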